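/- For all z ∈ (0, π): 8(2z⁴ + 8z² + 3)·sin(2z) + 80z·cos(2z) ≥ (64/9)·z·(18 − 9z² − 4z⁶). -/

import Mathlib

/-!
Integrating `cos ≤ 1` and `sin x ≤ x` repeatedly from `0` gives the alternating Taylor bounds
for `sin` and `cos` on `[0, ∞)`. Bounding `sin (2z)` below by its cubic and `cos (2z)` below by
its sextic Taylor polynomial, both against nonnegative weights, turns the left-hand side into a
polynomial that coincides with the right-hand side.
-/

open Real Finset
open scoped Nat

noncomputable def cosTaylor (n : ℕ) (x : ℝ) : ℝ :=
  ∑ k ∈ range n, (-1) ^ k * x ^ (2 * k) / (2 * k)!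

noncomputable def sinTaylor (n : ℕ) (x : ℝ) : ℝ :=
  ∑ k ∈ range n, (-1) ^ k * x ^ (2 * k + 1) / (2 * k + 1)!

theorem cosTaylor_succ_zero (n : ℕ) : cosTaylor (n + 1) 0 = 1 := by
  simp [cosTaylor, sum_range_succ']

theorem sinTaylor_zero (n : ℕ) : sinTaylor n 0 = 0 := by
  simp [sinTaylor]

theorem hasDerivAt_sinTaylor (n : ℕ) (x : ℝ) : HasDerivAt (sinTaylor n) (cosTaylor n x) x := by
  refine (HasDerivAt.fun_sum fun k _ => ((hasDerivAt_pow (2 * k + 1) x).const_mul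
    ((-1 : ℝ) ^ k)).div_const ((2 * k + 1)! : ℝ)).congr_deriv (sum_congr rfl fun k _ => ?_)
  rw [Nat.factorial_succ]
  push_cast
  field_simp

theorem hasDerivAt_cosTaylor_succ (n : ℕ) (x : ℝ) :
    HasDerivAt (cosTaylor (n + 1)) (-sinTaylor n x) x := by
  refine (HasDerivAt.fun_sum fun k _ => ((hasDerivAt_pow (2 * k) x).const_mul
    ((-1 : ℝ) ^ k)).div_const ((2 * k)! : ℝ)).congr_deriv ?_
  rw [sum_range_succ', sinTaylor, ← sum_neg_distrib]
  simp only [mul_zero, Nat.cast_zero, zero_mul, zero_div, add_zero]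
  refine sum_congr rfl fun k _ => ?_
  rw [show 2 * (k + 1) = (2 * k + 1) + 1 by ring, Nat.factorial_succ]
  push_cast
  field_simp
  ring

theorem nonneg_of_hasDerivAt_nonneg {f f' : ℝ → ℝ} (hf : ∀ x, HasDerivAt f (f' x) x)
    (h0 : 0 ≤ f 0) (hf' : ∀ x, 0 ≤ x → 0 ≤ f' x) {x : ℝ} (hx : 0 ≤ x) : 0 ≤ f x := by
  have hmono : MonotoneOn f (Set.Ici 0) :=
    monotoneOn_of_hasDerivWithinAt_nonneg (convex_Ici 0)
      (HasDerivAt.continuousOn fun x _ => hf x) (fun x _ => (hf x).hasDerivWithinAt)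
      fun x hx => hf' x (interior_subset hx)
  exact h0.trans (hmono Set.self_mem_Ici hx hx)

theorem cosTaylor_sinTaylor_alternating_bounds (n : ℕ) {x : ℝ} (hx : 0 ≤ x) :
    0 ≤ (-1) ^ n * (cosTaylor (n + 1) x - cos x) ∧
      0 ≤ (-1) ^ n * (sinTaylor (n + 1) x - sin x) := by
  induction n generalizing x with
  | zero => simp [cosTaylor, sinTaylor, cos_le_one, sin_le hx]
  | succ n ih =>
    have hcos : ∀ y, 0 ≤ y → 0 ≤ (-1) ^ (n + 1) * (cosTaylor (n + 2) y - cos y) :=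
      fun y hy => nonneg_of_hasDerivAt_nonneg
        (f := fun y => (-1) ^ (n + 1) * (cosTaylor (n + 2) y - cos y))
        (fun y => ((hasDerivAt_cosTaylor_succ (n + 1) y).sub (hasDerivAt_cos y)).const_mul _)
        (by simp [cosTaylor_succ_zero]) (fun t ht => by linear_combination (ih ht).2) hy
    exact ⟨hcos x hx, nonneg_of_hasDerivAt_nonneg
      (f := fun y => (-1) ^ (n + 1) * (sinTaylor (n + 2) y - sin y))
      (fun y => ((hasDerivAt_sinTaylor (n + 2) y).sub (hasDerivAt_sin y)).const_mul _)
      (by simp [sinTaylor_zero]) hcos hx⟩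

theorem cosTaylor_le_cos (m : ℕ) {x : ℝ} (hx : 0 ≤ x) : cosTaylor (2 * m + 2) x ≤ cos x := by
  have h := (cosTaylor_sinTaylor_alternating_bounds (2 * m + 1) hx).1
  rw [pow_succ, pow_mul] at h
  norm_num at h
  linarith

theorem cosTaylor_four (x : ℝ) :
    cosTaylor 4 x = 1 - x ^ 2 / 2 + x ^ 4 / 24 - x ^ 6 / 720 := by
  simp only [cosTaylor, sum_range_succ, range_zero, sum_empty, Nat.factorial]
  push_cast
  ring

theorem grushin_fifth_derivative_bound (z : ℝ) (hz : z ∈ Set.Ioo (0 : ℝ) π) :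
    8 * (2 * z ^ 4 + 8 * z ^ 2 + 3) * sin (2 * z) + 80 * z * cos (2 * z) ≥
      (64 / 9) * z * (18 - 9 * z ^ 2 - 4 * z ^ 6) := by
  have hz0 : 0 ≤ z := hz.1.le
  have h2z : 0 ≤ 2 * z := by positivity
  have hsin := mul_le_mul_of_nonneg_left (sin_ge_sub_cube h2z)
    (by positivity : 0 ≤ 8 * (2 * z ^ 4 + 8 * z ^ 2 + 3))
  have hcos := mul_le_mul_of_nonneg_left (cosTaylor_four (2 * z) ▸ cosTaylor_le_cos 1 h2z)
    (by positivity : 0 ≤ 80 * z)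
  linear_combination hsin + hcos
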